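/- (Error bound of distance estimation) Fix reals L < U, t > 0, ε > 0 and β ∈ (0, 2), and set μ = U − L + 2t. Let x_1, x_2 ∈ [L, U] with d_E = |x_1 − x_2| ≤ 2t, let d_H be the Hamming distance between the DPBV encodings of x_1 and x_2, and define the estimator d̂_E = (μ/(2s)) · ((e^ε + 1)/(e^ε − 1))^2 · d_H − μ e^ε/(e^ε − 1)^2. Then with probability at least 1 − β, |d̂_E − d_E| ≤ (μ/2) · ((e^ε + 1)/(e^ε − 1))^2 · √( ln(2/β) / (2s) ). -/

import Mathlib

open MeasureTheory ProbabilityTheory Real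

/-- The BV hash: `h_{r,t}(x) = 1` if `x ∈ [r - t, r + t]` and `0` otherwise. -/
noncomputable def bvHash (t r x : ℝ) : ℕ := if x ∈ Set.Icc (r - t) (r + t) then 1 else 0

/-- The uniform probability measure on the interval `[a, b]`. -/
noncomputable def uniformIcc (a b : ℝ) : Measure ℝ :=
  (ENNReal.ofReal (b - a))⁻¹ • (volume.restrict (Set.Icc a b))

/-- A DPBV bit: the BV hash bit `bvHash t r x` XOR-ed with the flip indicator `flip ∈ {0,1}`. -/
noncomputable def dpbvBit (t r x flip : ℝ) : ℕ :=
  if flip = 1 then 1 - bvHash t r x else bvHash t r x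

/-- The (random) Hamming distance between the DPBV encodings of `x₁` (with flips `f`) and `x₂`
(with flips `g`): the number of coordinates in which they differ. -/
noncomputable def dpbvHammingDist (t : ℝ) {s : ℕ} {Ω : Type*}
    (r f g : Fin s → Ω → ℝ) (x₁ x₂ : ℝ) (ω : Ω) : ℕ :=
  (Finset.univ.filter fun i =>
    dpbvBit t (r i ω) x₁ (f i ω) ≠ dpbvBit t (r i ω) x₂ (g i ω)).card

/-- The (random) DPBV Euclidean distance estimator
`d̂_E = (μ/(2s)) · ((e^ε + 1)/(e^ε − 1))² · d_H − μ·e^ε/(e^ε − 1)²`. -/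
noncomputable def dpbvEstimator (t μ ε : ℝ) {s : ℕ} {Ω : Type*}
    (r f g : Fin s → Ω → ℝ) (x₁ x₂ : ℝ) (ω : Ω) : ℝ :=
  μ / (2 * s) * ((exp ε + 1) / (exp ε - 1)) ^ 2 * (dpbvHammingDist t r f g x₁ x₂ ω : ℝ)
    - μ * exp ε / (exp ε - 1) ^ 2

/-!
Let `Z i ∈ {0, 1}` indicate that the `i`-th DPBV bits of `x₁` and `x₂` differ, so `d_H = ∑ i, Z i`.
XOR of bits is multiplication of signs: `1 - 2 Z i` is the product of the signs of three
independent events, namely `r i` lying in exactly one of the windows `[x_k - t, x_k + t]`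
(probability `2 d_E / μ`) and the two flips (probability `1 / (e^ε + 1)` each). Hence
`E[Z i] = p := (1 - (1 - 4 d_E / μ) ((e^ε - 1) / (e^ε + 1))²) / 2`, and the estimator is affine in
the centred sum: `d̂_E - d_E = (μ / (2s)) ((e^ε + 1) / (e^ε - 1))² (d_H - s p)`. The `Z i` are
functions of disjoint blocks `(r i, f i, g i)` of an independent family, hence independent, and
Hoeffding's inequality bounds `|d_H - s p| ≥ s δ` by `2 exp (-2 s δ²) = β` for
`δ = √(ln (2/β) / (2s))`.
-/

open scoped symmDiff NNReal

lemma iIndepFun_curry {Ω ι : Type*} [MeasurableSpace Ω] {P : Measure Ω} {κ : ι → Type*}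
    {𝓧 : (i : ι) → κ i → Type*} {m𝓧 : ∀ i j, MeasurableSpace (𝓧 i j)}
    {X : (i : ι) → (j : κ i) → Ω → 𝓧 i j} (mX : ∀ i j, Measurable (X i j))
    (h : iIndepFun (fun (p : (i : ι) × κ i) ω ↦ X p.1 p.2 ω) P) :
    iIndepFun (fun i ω ↦ (X i · ω)) P := by
  have := h.isProbabilityMeasure
  have : ∀ i j, IsProbabilityMeasure (P.map (X i j)) :=
    fun i j ↦ Measure.isProbabilityMeasure_map (mX i j).aemeasurable
  have hcurry : (fun ω i j ↦ X i j ω) = MeasurableEquiv.piCurry 𝓧 ∘ fun ω p ↦ X p.1 p.2 ω := rfl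
  rw [iIndepFun_iff_map_fun_eq_infinitePi_map (by fun_prop), hcurry,
    ← Measure.map_map (by fun_prop) (by fun_prop),
    (iIndepFun_iff_map_fun_eq_infinitePi_map (by fun_prop)).1 h,
    Measure.infinitePi_map_piCurry (fun i j ↦ P.map (X i j))]
  congrm Measure.infinitePi fun i ↦ ?_
  exact ((iIndepFun_iff_map_fun_eq_infinitePi_map (mX i)).1
    (h.precomp (g := Sigma.mk i) sigma_mk_injective)).symm

lemma measureReal_abs_sum_sub_integral_ge_le {Ω ι : Type*} [MeasurableSpace Ω] {P : Measure Ω}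
    [IsProbabilityMeasure P] {X : ι → Ω → ℝ} (hX : iIndepFun X P)
    (hm : ∀ i, AEMeasurable (X i) P) {a b : ℝ} (hab : ∀ i, ∀ᵐ ω ∂P, X i ω ∈ Set.Icc a b)
    (S : Finset ι) {ε : ℝ} (hε : 0 ≤ ε) :
    P.real {ω | ε ≤ |∑ i ∈ S, (X i ω - P[X i])|}
      ≤ 2 * exp (-2 * ε ^ 2 / (S.card * (b - a) ^ 2)) := by
  set Y : ι → Ω → ℝ := fun i ω ↦ X i ω - P[X i]
  have hY : iIndepFun Y P := hX.comp (fun i x ↦ x - ∫ ω, X i ω ∂P) (fun i ↦ by fun_prop)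
  have hsubG : ∀ i ∈ S, HasSubgaussianMGF (Y i) ((‖b - a‖₊ / 2) ^ 2) P := fun i _ ↦
    hasSubgaussianMGF_of_mem_Icc (hm i) (hab i)
  have hbound : exp (-ε ^ 2 / (2 * ∑ i ∈ S, ((‖b - a‖₊ / 2) ^ 2 : ℝ≥0)))
      = exp (-2 * ε ^ 2 / (S.card * (b - a) ^ 2)) := by
    simp only [Finset.sum_const, nsmul_eq_mul, NNReal.coe_mul, NNReal.coe_natCast, NNReal.coe_pow,
      NNReal.coe_div, coe_nnnorm, Real.norm_eq_abs, NNReal.coe_ofNat]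
    rw [div_pow, sq_abs]
    generalize (b - a) ^ 2 = c
    congr 1
    ring
  have hupper : P.real {ω | ε ≤ ∑ i ∈ S, Y i ω} ≤ _ :=
    HasSubgaussianMGF.measure_sum_ge_le_of_iIndepFun hY hsubG hε
  have hlower : P.real {ω | ε ≤ ∑ i ∈ S, -Y i ω} ≤ _ :=
    HasSubgaussianMGF.measure_sum_ge_le_of_iIndepFun
      (hY.comp (fun _ x ↦ -x) (fun _ ↦ by fun_prop)) (fun i hi ↦ (hsubG i hi).neg) hε
  rw [hbound] at hupper hlower
  calc P.real {ω | ε ≤ |∑ i ∈ S, Y i ω|}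
      ≤ P.real ({ω | ε ≤ ∑ i ∈ S, Y i ω} ∪ {ω | ε ≤ ∑ i ∈ S, -Y i ω}) := by
        refine measureReal_mono (fun ω hω ↦ ?_)
        rw [Set.mem_ofPred_eq, le_abs, ← Finset.sum_neg_distrib] at hω
        exact hω
    _ ≤ _ := (measureReal_union_le _ _).trans (by linarith)

lemma volume_real_symmDiff_Icc {t x y : ℝ} (hd : |x - y| ≤ 2 * t) :
    volume.real (Set.Icc (x - t) (x + t) ∆ Set.Icc (y - t) (y + t)) = 2 * |x - y| := by
  have hx := measureReal_inter_add_sdiff (μ := volume) (s := Set.Icc (x - t) (x + t))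
    (measurableSet_Icc (a := y - t) (b := y + t)) measure_Icc_lt_top.ne
  have hy := measureReal_inter_add_sdiff (μ := volume) (s := Set.Icc (y - t) (y + t))
    (measurableSet_Icc (a := x - t) (b := x + t)) measure_Icc_lt_top.ne
  have hinter : volume.real (Set.Icc (x - t) (x + t) ∩ Set.Icc (y - t) (y + t))
      = 2 * t - |x - y| := by
    rw [Set.Icc_inter_Icc, max_sub_sub_right, min_add_add_right, volume_real_Icc_of_le] <;>
      linarith [max_sub_min_eq_abs' x y]
  rw [measureReal_symmDiff_eq measurableSet_Icc measurableSet_Icc measure_Icc_lt_top.ne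
    measure_Icc_lt_top.ne]
  have ht : 0 ≤ 2 * t := (abs_nonneg _).trans hd
  rw [Set.inter_comm, hinter, volume_real_Icc_of_le (by linarith)] at hy
  rw [hinter, volume_real_Icc_of_le (by linarith)] at hx
  linarith

lemma uniformIcc_real_of_subset {a b : ℝ} (hab : a < b) {S : Set ℝ} (hS : S ⊆ Set.Icc a b) :
    (uniformIcc a b).real S = volume.real S / (b - a) := by
  rw [uniformIcc, measureReal_ennreal_smul_apply, measureReal_restrict_apply' measurableSet_Icc,
    Set.inter_eq_left.2 hS, ENNReal.toReal_inv, ENNReal.toReal_ofReal (by linarith),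
    inv_mul_eq_div]

noncomputable def setSign {α : Type*} (S : Set α) (x : α) : ℝ := 1 - 2 * S.indicator 1 x

lemma measurable_setSign {α : Type*} [MeasurableSpace α] {S : Set α} (hS : MeasurableSet S) :
    Measurable (setSign S) :=
  measurable_const.sub (measurable_const.mul (measurable_one.indicator hS))

lemma integral_setSign_comp {Ω α : Type*} [MeasurableSpace Ω] [MeasurableSpace α] {P : Measure Ω}
    [IsProbabilityMeasure P] {Y : Ω → α} (hY : Measurable Y) {S : Set α} (hS : MeasurableSet S) :
    ∫ ω, setSign S (Y ω) ∂P = 1 - 2 * P.real (Y ⁻¹' S) := by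
  have h : (fun ω ↦ setSign S (Y ω)) = fun ω ↦ 1 - 2 * (Y ⁻¹' S).indicator 1 ω := by
    ext ω; rw [setSign, ← Set.indicator_comp_right]; rfl
  rw [h, integral_sub (integrable_const _) (((integrable_const 1).indicator (hY hS)).const_mul 2),
    integral_const_mul, integral_indicator_one (hY hS)]
  simp

noncomputable def dpbvBitDiff (t x₁ x₂ ρ φ γ : ℝ) : ℝ :=
  if dpbvBit t ρ x₁ φ ≠ dpbvBit t ρ x₂ γ then 1 else 0

lemma bvHash_eq_ite (t ρ x : ℝ) :
    bvHash t ρ x = if ρ ∈ Set.Icc (x - t) (x + t) then 1 else 0 := by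
  refine if_congr ?_ rfl rfl
  simp only [Set.mem_Icc]
  constructor <;> rintro ⟨h₁, h₂⟩ <;> constructor <;> linarith

lemma dpbvBitDiff_eq (t x₁ x₂ ρ φ γ : ℝ) :
    dpbvBitDiff t x₁ x₂ ρ φ γ
      = (1 - setSign (Set.Icc (x₁ - t) (x₁ + t) ∆ Set.Icc (x₂ - t) (x₂ + t)) ρ
        * setSign {1} φ * setSign {1} γ) / 2 := by
  by_cases h₁ : ρ ∈ Set.Icc (x₁ - t) (x₁ + t) <;> by_cases h₂ : ρ ∈ Set.Icc (x₂ - t) (x₂ + t) <;>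
  by_cases hφ : φ = 1 <;> by_cases hγ : γ = 1 <;>
  simp [dpbvBitDiff, dpbvBit, setSign, bvHash_eq_ite, Set.mem_symmDiff, h₁, h₂, hφ, hγ] <;> norm_num

lemma dpbvBitDiff_mem_Icc (t x₁ x₂ ρ φ γ : ℝ) : dpbvBitDiff t x₁ x₂ ρ φ γ ∈ Set.Icc 0 1 := by
  unfold dpbvBitDiff; split_ifs <;> simp

lemma Measurable.dpbvBitDiff {α : Type*} [MeasurableSpace α] {ρ φ γ : α → ℝ} (hρ : Measurable ρ)
    (hφ : Measurable φ) (hγ : Measurable γ) (t x₁ x₂ : ℝ) :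
    Measurable fun a ↦ dpbvBitDiff t x₁ x₂ (ρ a) (φ a) (γ a) := by
  have hS : MeasurableSet (Set.Icc (x₁ - t) (x₁ + t) ∆ Set.Icc (x₂ - t) (x₂ + t)) :=
    measurableSet_Icc.symmDiff measurableSet_Icc
  have h1 := measurable_setSign (measurableSet_singleton (1 : ℝ))
  simp only [dpbvBitDiff_eq]
  exact (measurable_const.sub ((((measurable_setSign hS).comp hρ).mul (h1.comp hφ)).mul
    (h1.comp hγ))).div_const 2

lemma dpbvHammingDist_eq_sum (t : ℝ) {s : ℕ} {Ω : Type*} (r f g : Fin s → Ω → ℝ) (x₁ x₂ : ℝ)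
    (ω : Ω) :
    (dpbvHammingDist t r f g x₁ x₂ ω : ℝ) = ∑ i, dpbvBitDiff t x₁ x₂ (r i ω) (f i ω) (g i ω) := by
  rw [dpbvHammingDist, Finset.card_filter]
  push_cast
  rfl

noncomputable def dpbvBitDiffProb (μ ε d : ℝ) : ℝ :=
  (1 - (1 - 4 * d / μ) * ((exp ε - 1) / (exp ε + 1)) ^ 2) / 2

lemma dpbvEstimator_sub_eq (t μ ε d : ℝ) (hμ : μ ≠ 0) (hε : ε ≠ 0) {s : ℕ} (hs : s ≠ 0)
    {Ω : Type*} (r f g : Fin s → Ω → ℝ) (x₁ x₂ : ℝ) (ω : Ω) :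
    dpbvEstimator t μ ε r f g x₁ x₂ ω - d = μ / (2 * s) * ((exp ε + 1) / (exp ε - 1)) ^ 2
      * ∑ i, (dpbvBitDiff t x₁ x₂ (r i ω) (f i ω) (g i ω) - dpbvBitDiffProb μ ε d) := by
  have he : exp ε - 1 ≠ 0 := sub_ne_zero.2 (mt (Real.exp_eq_one_iff ε).1 hε)
  have he' : exp ε + 1 ≠ 0 := by positivity
  rw [dpbvEstimator, dpbvHammingDist_eq_sum, Finset.sum_sub_distrib, Finset.sum_const,
    Finset.card_univ, Fintype.card_fin, nsmul_eq_mul, dpbvBitDiffProb]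
  field_simp
  ring

lemma abs_dpbvEstimator_sub_le {t μ ε d δ : ℝ} (hμ : 0 < μ) (hε : 0 < ε) {s : ℕ} (hs : s ≠ 0)
    {Ω : Type*} {r f g : Fin s → Ω → ℝ} {x₁ x₂ : ℝ} {ω : Ω}
    (h : |∑ i, (dpbvBitDiff t x₁ x₂ (r i ω) (f i ω) (g i ω) - dpbvBitDiffProb μ ε d)| ≤ s * δ) :
    |dpbvEstimator t μ ε r f g x₁ x₂ ω - d| ≤ μ / 2 * ((exp ε + 1) / (exp ε - 1)) ^ 2 * δ := by
  have hs' : (0 : ℝ) < s := Nat.cast_pos.2 (Nat.pos_of_ne_zero hs)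
  have hC : 0 < μ / (2 * s) * ((exp ε + 1) / (exp ε - 1)) ^ 2 := by
    have : 1 < exp ε := one_lt_exp_iff.2 hε
    have : 0 < (exp ε + 1) / (exp ε - 1) := div_pos (by linarith) (by linarith)
    positivity
  rw [dpbvEstimator_sub_eq t μ ε d hμ.ne' hε.ne' hs, abs_mul, abs_of_pos hC]
  calc _ ≤ μ / (2 * s) * ((exp ε + 1) / (exp ε - 1)) ^ 2 * (s * δ) := by gcongr
    _ = _ := by field_simp

lemma two_mul_exp_neg_two_mul_sq_sqrt_log_eq {β n : ℝ} (hβ₀ : 0 < β) (hβ₂ : β ≤ 2) (hn : 0 < n) :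
    2 * exp (-2 * (n * √(log (2 / β) / (2 * n))) ^ 2 / n) = β := by
  have hlog : 0 ≤ log (2 / β) := log_nonneg ((one_le_div hβ₀).2 hβ₂)
  rw [mul_pow, sq_sqrt (by positivity),
    show -2 * (n ^ 2 * (log (2 / β) / (2 * n))) / n = -log (2 / β) by field_simp,
    exp_neg, exp_log (div_pos two_pos hβ₀)]
  field_simp

section Triples

variable {Ω : Type*} [MeasurableSpace Ω] {P : Measure Ω} {s : ℕ} {r f g : Fin s → Ω → ℝ}

def tripleIndex (p : (_ : Fin s) × Fin 3) : Fin s ⊕ (Fin s ⊕ Fin s) :=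
  ![.inl p.1, .inr (.inl p.1), .inr (.inr p.1)] p.2

lemma tripleIndex_injective : Function.Injective (tripleIndex (s := s)) := by
  rintro ⟨i, j⟩ ⟨i', j'⟩ h
  fin_cases j <;> fin_cases j' <;> simp_all [tripleIndex]

lemma iIndepFun_triple (hindep : iIndepFun (Sum.elim r (Sum.elim f g)) P) :
    iIndepFun (fun (p : (_ : Fin s) × Fin 3) ↦ ![r p.1, f p.1, g p.1] p.2) P := by
  convert hindep.precomp tripleIndex_injective using 2 with p
  obtain ⟨i, j⟩ := p
  fin_cases j <;> rfl

variable (hr : ∀ i, Measurable (r i)) (hf : ∀ i, Measurable (f i)) (hg : ∀ i, Measurable (g i))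
  (hindep : iIndepFun (Sum.elim r (Sum.elim f g)) P)
include hr hf hg hindep

lemma iIndepFun_dpbvBitDiff (t x₁ x₂ : ℝ) :
    iIndepFun (fun i ω ↦ dpbvBitDiff t x₁ x₂ (r i ω) (f i ω) (g i ω)) P :=
  (iIndepFun_curry (X := fun i ↦ ![r i, f i, g i])
    (fun i j ↦ by fin_cases j; exacts [hr i, hf i, hg i]) (iIndepFun_triple hindep)).comp
    (fun _ v ↦ dpbvBitDiff t x₁ x₂ (v 0) (v 1) (v 2))
    (fun _ ↦ (measurable_pi_apply 0).dpbvBitDiff (measurable_pi_apply 1) (measurable_pi_apply 2)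
      t x₁ x₂)

lemma integral_dpbvBitDiff (t x₁ x₂ : ℝ) (i : Fin s) :
    ∫ ω, dpbvBitDiff t x₁ x₂ (r i ω) (f i ω) (g i ω) ∂P
      = (1 - (1 - 2 * P.real (r i ⁻¹' (Set.Icc (x₁ - t) (x₁ + t) ∆ Set.Icc (x₂ - t) (x₂ + t))))
        * (1 - 2 * P.real (f i ⁻¹' {1})) * (1 - 2 * P.real (g i ⁻¹' {1}))) / 2 := by
  have := hindep.isProbabilityMeasure
  set S := Set.Icc (x₁ - t) (x₁ + t) ∆ Set.Icc (x₂ - t) (x₂ + t)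
  have hS : MeasurableSet S := measurableSet_Icc.symmDiff measurableSet_Icc
  have hprod := ((iIndepFun_triple hindep).precomp (g := Sigma.mk i)
    sigma_mk_injective).integral_fun_prod_comp (f := ![setSign S, setSign {1}, setSign {1}])
    (fun j ↦ by fin_cases j; exacts [(hr i).aemeasurable, (hf i).aemeasurable, (hg i).aemeasurable])
    (fun j ↦ by
      fin_cases j
      exacts [(measurable_setSign hS).aestronglyMeasurable,
        (measurable_setSign (measurableSet_singleton 1)).aestronglyMeasurable,
        (measurable_setSign (measurableSet_singleton 1)).aestronglyMeasurable])
  simp only [Fin.prod_univ_three, Matrix.cons_val_zero, Matrix.cons_val_one,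
    Matrix.cons_val_two, Matrix.head_cons, Matrix.tail_cons] at hprod
  rw [integral_setSign_comp (hr i) hS, integral_setSign_comp (hf i) (measurableSet_singleton 1),
    integral_setSign_comp (hg i) (measurableSet_singleton 1)] at hprod
  have hZ : Integrable (fun ω ↦ dpbvBitDiff t x₁ x₂ (r i ω) (f i ω) (g i ω)) P :=
    Integrable.of_mem_Icc 0 1 ((hr i).dpbvBitDiff (hf i) (hg i) t x₁ x₂).aemeasurable
      (ae_of_all _ fun ω ↦ dpbvBitDiff_mem_Icc ..)
  have hsign : ∫ ω, setSign S (r i ω) * setSign {1} (f i ω) * setSign {1} (g i ω) ∂P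
      = 1 - 2 * ∫ ω, dpbvBitDiff t x₁ x₂ (r i ω) (f i ω) (g i ω) ∂P := by
    have hpt : ∀ ω, setSign S (r i ω) * setSign {1} (f i ω) * setSign {1} (g i ω)
        = 1 - 2 * dpbvBitDiff t x₁ x₂ (r i ω) (f i ω) (g i ω) := fun ω ↦ by
      rw [dpbvBitDiff_eq]; ring
    rw [integral_congr_ae (ae_of_all _ hpt), integral_sub (integrable_const 1) (hZ.const_mul 2),
      integral_const_mul]
    simp
  linarith

lemma integral_dpbvBitDiff_eq_dpbvBitDiffProb {L U t ε x₁ x₂ : ℝ} (ht : 0 < t)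
    (hrlaw : ∀ i, Measure.map (r i) P = uniformIcc (L - t) (U + t))
    (hflaw : ∀ i, P {ω | f i ω = 1} = ENNReal.ofReal (1 / (exp ε + 1)))
    (hglaw : ∀ i, P {ω | g i ω = 1} = ENNReal.ofReal (1 / (exp ε + 1)))
    (hx₁ : x₁ ∈ Set.Icc L U) (hx₂ : x₂ ∈ Set.Icc L U) (hd : |x₁ - x₂| ≤ 2 * t) (i : Fin s) :
    ∫ ω, dpbvBitDiff t x₁ x₂ (r i ω) (f i ω) (g i ω) ∂P
      = dpbvBitDiffProb (U - L + 2 * t) ε |x₁ - x₂| := by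
  have hsub : Set.Icc (x₁ - t) (x₁ + t) ∆ Set.Icc (x₂ - t) (x₂ + t) ⊆ Set.Icc (L - t) (U + t) :=
    Set.symmDiff_subset_union.trans (Set.union_subset
      (Set.Icc_subset_Icc (by linarith [hx₁.1]) (by linarith [hx₁.2]))
      (Set.Icc_subset_Icc (by linarith [hx₂.1]) (by linarith [hx₂.2])))
  have hr' : P.real (r i ⁻¹' (Set.Icc (x₁ - t) (x₁ + t) ∆ Set.Icc (x₂ - t) (x₂ + t)))
      = 2 * |x₁ - x₂| / (U - L + 2 * t) := by
    rw [← map_measureReal_apply (hr i) (measurableSet_Icc.symmDiff measurableSet_Icc), hrlaw i,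
      uniformIcc_real_of_subset (by linarith [hx₁.1, hx₁.2]) hsub, volume_real_symmDiff_Icc hd]
    ring_nf
  have hflip : ∀ {φ : Ω → ℝ}, P {ω | φ ω = 1} = ENNReal.ofReal (1 / (exp ε + 1)) →
      P.real (φ ⁻¹' {1}) = 1 / (exp ε + 1) := fun h ↦ by
    simp only [measureReal_def, Set.preimage, Set.mem_singleton_iff, h]
    exact ENNReal.toReal_ofReal (by positivity)
  rw [integral_dpbvBitDiff hr hf hg hindep, hr', hflip (hflaw i), hflip (hglaw i), dpbvBitDiffProb]
  have : U - L + 2 * t ≠ 0 := by linarith [hx₁.1, hx₁.2]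
  field_simp
  ring

end Triples

theorem dpbv_estimator_error_bound_general
    {Ω : Type*} [MeasurableSpace Ω] (P : Measure Ω) [IsProbabilityMeasure P]
    (L U t μ ε β : ℝ) (ht : 0 < t) (hε : 0 < ε) (hβ : β ∈ Set.Ioo (0 : ℝ) 2)
    (hμ : μ = U - L + 2 * t)
    (s : ℕ) (hs : 1 ≤ s) (r f g : Fin s → Ω → ℝ)
    (hr : ∀ i, Measurable (r i)) (hf : ∀ i, Measurable (f i)) (hg : ∀ i, Measurable (g i))
    (hrlaw : ∀ i, Measure.map (r i) P = uniformIcc (L - t) (U + t))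
    (hflaw : ∀ i, P {ω | f i ω = 1} = ENNReal.ofReal (1 / (exp ε + 1)))
    (hglaw : ∀ i, P {ω | g i ω = 1} = ENNReal.ofReal (1 / (exp ε + 1)))
    (hindep : iIndepFun
      (Sum.elim r (Sum.elim f g)) P)
    (x₁ x₂ : ℝ) (hx₁ : x₁ ∈ Set.Icc L U) (hx₂ : x₂ ∈ Set.Icc L U)
    (hd : |x₁ - x₂| ≤ 2 * t) :
    ENNReal.ofReal (1 - β)
      ≤ P {ω | abs (dpbvEstimator t μ ε r f g x₁ x₂ ω - |x₁ - x₂|)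
          ≤ μ / 2 * ((exp ε + 1) / (exp ε - 1)) ^ 2 * Real.sqrt (Real.log (2 / β) / (2 * s))} := by
  set δ := √(log (2 / β) / (2 * s))
  set p := dpbvBitDiffProb μ ε |x₁ - x₂|
  set Z : Fin s → Ω → ℝ := fun i ω ↦ dpbvBitDiff t x₁ x₂ (r i ω) (f i ω) (g i ω)
  have hZ : ∀ i, Measurable (Z i) := fun i ↦ (hr i).dpbvBitDiff (hf i) (hg i) t x₁ x₂
  have hmean : ∀ i, P[Z i] = p := fun i ↦ by
    simp only [p, hμ]
    exact integral_dpbvBitDiff_eq_dpbvBitDiffProb hr hf hg hindep ht hrlaw hflaw hglaw hx₁ hx₂ hd i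
  have htail : P.real {ω | s * δ ≤ |∑ i, (Z i ω - p)|} ≤ β := by
    have := measureReal_abs_sum_sub_integral_ge_le (X := Z)
      (iIndepFun_dpbvBitDiff hr hf hg hindep t x₁ x₂) (fun i ↦ (hZ i).aemeasurable)
      (fun i ↦ ae_of_all _ fun ω ↦ dpbvBitDiff_mem_Icc ..) Finset.univ (ε := s * δ) (by positivity)
    rw [Finset.card_univ, Fintype.card_fin, sub_zero, one_pow, mul_one,
      two_mul_exp_neg_two_mul_sq_sqrt_log_eq hβ.1 hβ.2.le (by positivity)] at this
    simpa only [hmean] using this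
  have hmeas : MeasurableSet {ω | s * δ ≤ |∑ i, (Z i ω - p)|} :=
    measurableSet_le measurable_const (Finset.measurable_sum _ fun i _ ↦ (hZ i).sub_const p).abs
  calc ENNReal.ofReal (1 - β)
      ≤ ENNReal.ofReal (P.real {ω | s * δ ≤ |∑ i, (Z i ω - p)|}ᶜ) := by
        rw [probReal_compl_eq_one_sub hmeas]
        exact ENNReal.ofReal_le_ofReal (by linarith)
    _ ≤ _ := by
        rw [ofReal_measureReal]
        exact measure_mono fun ω hω ↦ abs_dpbvEstimator_sub_le (by linarith [hx₁.1, hx₁.2]) hε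
          (by omega) (not_le.1 (Set.notMem_ofPred_iff.1 hω)).le

/-- (Error bound of distance estimation) For `L < U`, `t > 0`, `ε > 0`, `β ∈ (0, 2)`,
`μ = U - L + 2t`, with `r 0, …, r (s-1)` i.i.d. uniform on `[L - t, U + t]`, flip indicators
`f i, g i ∈ {0,1}` each equal to `1` with probability `1/(e^ε + 1)`, all mutually independent,
and `x₁, x₂ ∈ [L, U]` with `d_E = |x₁ - x₂| ≤ 2t`, with probability at least `1 − β` we have
`|d̂_E − d_E| ≤ (μ/2) · ((e^ε + 1)/(e^ε − 1))² · √(ln(2/β)/(2s))`. -/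
theorem dpbv_estimator_error_bound
    {Ω : Type*} [MeasurableSpace Ω] (P : Measure Ω) [IsProbabilityMeasure P]
    (L U t μ ε β : ℝ) (hLU : L < U) (ht : 0 < t) (hε : 0 < ε) (hβ : β ∈ Set.Ioo (0 : ℝ) 2)
    (hμ : μ = U - L + 2 * t)
    (s : ℕ) (hs : 1 ≤ s) (r f g : Fin s → Ω → ℝ)
    (hr : ∀ i, Measurable (r i)) (hf : ∀ i, Measurable (f i)) (hg : ∀ i, Measurable (g i))
    (hrlaw : ∀ i, Measure.map (r i) P = uniformIcc (L - t) (U + t))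
    (hf01 : ∀ i ω, f i ω = 0 ∨ f i ω = 1) (hg01 : ∀ i ω, g i ω = 0 ∨ g i ω = 1)
    (hflaw : ∀ i, P {ω | f i ω = 1} = ENNReal.ofReal (1 / (exp ε + 1)))
    (hglaw : ∀ i, P {ω | g i ω = 1} = ENNReal.ofReal (1 / (exp ε + 1)))
    (hindep : iIndepFun
      (Sum.elim r (Sum.elim f g)) P)
    (x₁ x₂ : ℝ) (hx₁ : x₁ ∈ Set.Icc L U) (hx₂ : x₂ ∈ Set.Icc L U)
    (hd : |x₁ - x₂| ≤ 2 * t) :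
    ENNReal.ofReal (1 - β)
      ≤ P {ω | abs (dpbvEstimator t μ ε r f g x₁ x₂ ω - |x₁ - x₂|)
          ≤ μ / 2 * ((exp ε + 1) / (exp ε - 1)) ^ 2 * Real.sqrt (Real.log (2 / β) / (2 * s))} :=
  dpbv_estimator_error_bound_general P L U t μ ε β ht hε hβ hμ s hs r f g hr hf hg hrlaw hflaw hglaw
    hindep x₁ x₂ hx₁ hx₂ hd
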